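/- Let m ≥ 1 and let D be any set of Dyck words of length 2m. Then the set {1·w : w ∈ D} of binary words of length 2m+1 obtained by prepending the symbol 1 to each word of D is mutually uncorrelated. -/

import Mathlib

/-- The four-letter DNA alphabet. -/
inductive DNA | A | T | G | C
deriving DecidableEq

/-- Hamming distance between two words (of equal length) given as lists. -/
def hammingD {α : Type*} [DecidableEq α] (x y : List α) : ℕ :=
  (x.zip y).countP (fun p => decide (p.1 ≠ p.2))

/-- A binary word has `D`-bounded running digital sum if in every prefix the
numbers of ones and zeros differ by at most `D`. -/
def brds (D : ℕ) (w : List Bool) : Prop :=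
  ∀ k ≤ w.length,
    (((w.take k).count true : ℤ) - ((w.take k).count false : ℤ)).natAbs ≤ D

/-- The letters `G`, `C` of the DNA alphabet. -/
def isGC : DNA → Bool
  | DNA.G => true
  | DNA.C => true
  | _ => false

/-- A DNA word is `D`-GC-prefix-balanced if in every prefix the number of
letters from {G,C} and the number of letters from {A,T} differ by at most `D`. -/
def gcpb (D : ℕ) (w : List DNA) : Prop :=
  ∀ k ≤ w.length,
    (((w.take k).countP isGC : ℤ) - ((w.take k).countP (fun c => !(isGC c)) : ℤ)).natAbs ≤ D

/-- A word is self-uncorrelated if no proper nonempty prefix equals the suffix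
of the same length. -/
def selfUncorr {α : Type*} (w : List α) : Prop :=
  ∀ k, 1 ≤ k → k ≤ w.length - 1 → w.take k ≠ w.drop (w.length - k)

/-- A set of words is mutually uncorrelated if every word is self-uncorrelated
and for every ordered pair of distinct words `x`, `y` no nonempty prefix of `y`
equals a suffix of `x` of the same length. -/
def mutUncorr {α : Type*} (S : Set (List α)) : Prop :=
  (∀ w ∈ S, selfUncorr w) ∧
  ∀ x ∈ S, ∀ y ∈ S, x ≠ y →
    ∀ k, 1 ≤ k → k ≤ x.length → y.take k ≠ x.drop (x.length - k)

/-- A Dyck word: equal numbers of ones and zeros, and every prefix has at least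
as many ones as zeros. -/
def isDyck (w : List Bool) : Prop :=
  w.count true = w.count false ∧
  ∀ k ≤ w.length, (w.take k).count false ≤ (w.take k).count true

/-- The height of a (Dyck) word is at most `D`: in every prefix the number of
ones exceeds the number of zeros by at most `D`. -/
def heightLe (D : ℕ) (w : List Bool) : Prop :=
  ∀ k ≤ w.length, ((w.take k).count true : ℤ) - ((w.take k).count false : ℤ) ≤ (D : ℤ)


/-!
Weight a one by `+1` and a zero by `-1`. A nonempty prefix of `1·y` with `y` a Dyck word has
positive weight, while a proper suffix of `1·x` with `x` a Dyck word is a suffix of `x`, whose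
weight is the total weight `0` of `x` minus the nonnegative weight of a prefix. Hence no overlap
of length at most `2m` is possible, and an overlap of full length `2m + 1` forces the two words
to coincide.
-/

namespace List

def balance (l : List Bool) : ℤ := (l.count true : ℤ) - l.count false

@[simp]
lemma balance_cons_true (l : List Bool) : balance (true :: l) = 1 + balance l := by
  simp [balance]; ring

lemma balance_take_add_balance_drop (l : List Bool) (j : ℕ) :
    balance (l.take j) + balance (l.drop j) = balance l := by
  conv_rhs => rw [← take_append_drop j l]
  simp only [balance, count_append]; push_cast; ring

end List

open List

lemma isDyck.balance_eq_zero {w : List Bool} (hw : isDyck w) : w.balance = 0 := by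
  simp [balance, hw.1]

lemma isDyck.balance_take_nonneg {w : List Bool} (hw : isDyck w) (k : ℕ) :
    0 ≤ (w.take k).balance := by
  rcases le_or_gt k w.length with hk | hk
  · have := hw.2 k hk
    simp only [balance]; omega
  · rw [take_of_length_le hk.le, hw.balance_eq_zero]

lemma isDyck.balance_drop_nonpos {w : List Bool} (hw : isDyck w) (j : ℕ) :
    (w.drop j).balance ≤ 0 := by
  have h := balance_take_add_balance_drop w j
  rw [hw.balance_eq_zero] at h
  linarith [hw.balance_take_nonneg j]

lemma isDyck.balance_take_cons_true_pos {w : List Bool} (hw : isDyck w) {k : ℕ} (hk : 1 ≤ k) :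
    0 < ((true :: w).take k).balance := by
  obtain ⟨k, rfl⟩ := Nat.exists_eq_add_of_le' hk
  rw [take_succ_cons, balance_cons_true]
  have := hw.balance_take_nonneg k
  omega

lemma isDyck.take_cons_true_ne_drop_cons_true {x y : List Bool} (hx : isDyck x) (hy : isDyck y)
    {k : ℕ} (hk₁ : 1 ≤ k) (hk₂ : k ≤ x.length) :
    (true :: y).take k ≠ (true :: x).drop (x.length + 1 - k) := by
  intro h
  have hpos := hy.balance_take_cons_true_pos hk₁
  rw [h, show x.length + 1 - k = (x.length - k) + 1 by omega, drop_succ_cons] at hpos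
  exact (hx.balance_drop_nonpos _).not_gt hpos

theorem stmt6_general (m : ℕ) (Dset : Set (List Bool))
    (hDset : ∀ w ∈ Dset, w.length = 2 * m ∧ isDyck w) :
    mutUncorr ((fun w => true :: w) '' Dset) := by
  refine ⟨?_, ?_⟩
  · rintro _ ⟨u, hu, rfl⟩ k hk₁ hk₂
    have hu := (hDset u hu).2
    exact hu.take_cons_true_ne_drop_cons_true hu hk₁ (by simpa using hk₂)
  · rintro _ ⟨x, hx, rfl⟩ _ ⟨y, hy, rfl⟩ hne k hk₁ hk₂
    obtain ⟨hx_len, hx⟩ := hDset x hx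
    obtain ⟨hy_len, hy⟩ := hDset y hy
    by_cases hk : k ≤ x.length
    · exact hx.take_cons_true_ne_drop_cons_true hy hk₁ hk
    · have hk : k = y.length + 1 := by simp at hk₂; omega
      rw [hk, take_of_length_le (by simp), length_cons, hx_len, hy_len, Nat.sub_self, drop_zero]
      exact hne.symm

/-- prepending a one to every word of a set of Dyck words of
length `2m` yields a mutually uncorrelated set of binary words. -/
theorem stmt6 (m : ℕ) (hm : 1 ≤ m) (Dset : Set (List Bool))
    (hDset : ∀ w ∈ Dset, w.length = 2 * m ∧ isDyck w) :
    mutUncorr ((fun w => true :: w) '' Dset) :=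
  stmt6_general m Dset hDset
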